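/- arXiv:2501.07519 — 2 statements merged into one kernel-verified Lean document; each statement's English description precedes it below -/
import Mathlib

section
/- Let P be a locally finite poset and k a field of characteristic 0. For f ∈ C^p(P;k) and g ∈ C^q(P;k) (p, q ≥ 1), the map Φ intertwines cup products: Φ(f ⌣ g) = (Φf) ⌣ (Φg) as k-multilinear maps (kP)^{p+q} → kP, where f ⌣ g is the simplicial cup product and (Φf) ⌣ (Φg) is the Hochschild cup product. -/
/-!
A chain `x = i₀ ≤ ⋯ ≤ i_{p+q} = y` is cut at its vertex `j = i_p` into a chain of length `p`
from `x` to `j` and one of length `q` from `j` to `y`; conversely two such chains glue back, so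
chains from `x` to `y` correspond to triples `(j, c₁, c₂)` with `j ∈ [x, y]`. Under this
correspondence the summand of `Φ(f ⌣ g)` is the product of the summands of `Φf` and `Φg`,
so the sum over chains becomes the convolution `∑ⱼ (Φf)(x, j) (Φg)(j, y)`.
-/

open Finset

/-- The Hochschild cup product:
`(F ⌣ G)(a_1, …, a_{p+q}) = F(a_1, …, a_p) * G(a_{p+1}, …, a_{p+q})`. -/
def hCup {A : Type*} [Mul A] (p q : ℕ) (F : (Fin p → A) → A) (G : (Fin q → A) → A) :
    (Fin (p + q) → A) → A :=
  fun a => F (fun t => a ⟨t, by omega⟩) * G (fun s => a ⟨p + (s : ℕ), by omega⟩)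

section Incidence
variable (k : Type*) [Field k] (P : Type*) [PartialOrder P] [LocallyFiniteOrder P]
  [DecidableEq P]

/-- A chain (simplex) of length `n` in the poset `P`: a monotone `(n+1)`-tuple. -/
abbrev SChain (n : ℕ) := {c : Fin (n + 1) → P // Monotone c}

open scoped Classical in
/-- The finset of monotone `(n+1)`-tuples from `x` to `y`. -/
noncomputable def chainTuples (n : ℕ) (x y : P) : Finset (Fin (n + 1) → P) :=
  (Fintype.piFinset fun _ => Finset.Icc x y).filter fun c =>
    Monotone c ∧ c 0 = x ∧ c (Fin.last n) = y

lemma chainTuples_mono {n : ℕ} {x y : P} {c : Fin (n + 1) → P}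
    (hc : c ∈ chainTuples P n x y) : Monotone c := by
  classical
  simp only [chainTuples, Finset.mem_filter] at hc
  exact hc.2.1

lemma le_of_mem_chainTuples {n : ℕ} {x y : P} {c : Fin (n + 1) → P}
    (hc : c ∈ chainTuples P n x y) : x ≤ y := by
  classical
  simp only [chainTuples, Finset.mem_filter] at hc
  exact hc.2.2.1 ▸ hc.2.2.2 ▸ hc.2.1 (Fin.zero_le _)

/-- The map `Φ` from simplicial `n`-cochains on `P` to Hochschild `n`-cochains of `kP`:
`(Φf)(a_1, …, a_n)(x, y) = ∑_{x = i₀ ≤ ⋯ ≤ iₙ = y} f(i₀, …, iₙ)·a_1(i₀,i₁)⋯aₙ(i_{n-1},iₙ)`. -/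
noncomputable def Phi (n : ℕ) (f : SChain P n → k) (a : Fin n → IncidenceAlgebra k P) :
    IncidenceAlgebra k P :=
  ⟨fun x y => ∑ c ∈ (chainTuples P n x y).attach,
      f ⟨c.1, chainTuples_mono P c.2⟩ * ∏ t : Fin n, a t (c.1 t.castSucc) (c.1 t.succ),
   fun x y hxy => by
    try dsimp only
    exact Finset.sum_eq_zero fun c _ => absurd (le_of_mem_chainTuples P c.2) hxy⟩

end Incidence

section Simplicial
variable (k : Type*) [Field k] (P : Type*) [PartialOrder P]

/-- The simplicial cup product:
`(f ⌣ g)(i_0, …, i_{p+q}) = f(i_0, …, i_p) ⬝ g(i_p, …, i_{p+q})`. -/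
def sCup (p q : ℕ) (f : SChain P p → k) (g : SChain P q → k) : SChain P (p + q) → k :=
  fun c =>
    f ⟨fun t => c.1 ⟨t, by omega⟩,
       c.2.comp (by
         intro s t hst
         have hst' : (s : ℕ) ≤ (t : ℕ) := hst
         simp only [Fin.mk_le_mk]
         omega)⟩ *
    g ⟨fun s => c.1 ⟨p + (s : ℕ), by omega⟩,
       c.2.comp (by
         intro s t hst
         have hst' : (s : ℕ) ≤ (t : ℕ) := hst
         simp only [Fin.mk_le_mk]
         omega)⟩

end Simplicial

section Split
variable {α : Type*} (p q : ℕ)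

def chainFront (c : Fin (p + q + 1) → α) : Fin (p + 1) → α := fun t => c ⟨t, by omega⟩

def chainBack (c : Fin (p + q + 1) → α) : Fin (q + 1) → α := fun s => c ⟨p + s, by omega⟩

def chainJoin (c₁ : Fin (p + 1) → α) (c₂ : Fin (q + 1) → α) : Fin (p + q + 1) → α :=
  fun t => if h : (t : ℕ) ≤ p then c₁ ⟨t, by omega⟩ else c₂ ⟨t - p, by omega⟩

variable {p q}

@[simp]
lemma chainFront_chainJoin (c₁ : Fin (p + 1) → α) (c₂ : Fin (q + 1) → α) :
    chainFront p q (chainJoin p q c₁ c₂) = c₁ := by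
  funext t
  simp [chainFront, chainJoin, Nat.le_of_lt_succ t.isLt]

lemma chainBack_chainJoin {c₁ : Fin (p + 1) → α} {c₂ : Fin (q + 1) → α}
    (h : c₁ (Fin.last p) = c₂ 0) : chainBack p q (chainJoin p q c₁ c₂) = c₂ := by
  funext s
  by_cases hs : (s : ℕ) = 0
  · obtain rfl : s = 0 := Fin.ext hs
    simpa [chainBack, chainJoin, Fin.last] using h
  · simp [chainBack, chainJoin, hs]

@[simp]
lemma chainJoin_chainFront_chainBack (c : Fin (p + q + 1) → α) :
    chainJoin p q (chainFront p q c) (chainBack p q c) = c := by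
  funext t
  by_cases ht : (t : ℕ) ≤ p
  · simp [chainFront, chainJoin, ht]
  · simp only [chainFront, chainBack, chainJoin, ht, dite_false]
    congr 1
    ext
    simp only
    omega

lemma chainFront_last (c : Fin (p + q + 1) → α) :
    chainFront p q c (Fin.last p) = chainBack p q c 0 := rfl

variable [Preorder α] {c : Fin (p + q + 1) → α}

lemma Monotone.chainFront (hc : Monotone c) : Monotone (chainFront p q c) :=
  fun _ _ hst => hc hst

lemma Monotone.chainBack (hc : Monotone c) : Monotone (chainBack p q c) :=
  fun _ _ hst => hc (Nat.add_le_add_left hst p)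

lemma Monotone.chainJoin {c₁ : Fin (p + 1) → α} {c₂ : Fin (q + 1) → α} (h₁ : Monotone c₁)
    (h₂ : Monotone c₂) (h : c₁ (Fin.last p) = c₂ 0) : Monotone (chainJoin p q c₁ c₂) := by
  intro s t (hst : (s : ℕ) ≤ t)
  by_cases ht : (t : ℕ) ≤ p
  · simp only [_root_.chainJoin, ht, hst.trans ht, dite_true]
    exact h₁ hst
  by_cases hs : (s : ℕ) ≤ p
  · simp only [_root_.chainJoin, hs, ht, dite_true, dite_false]
    calc c₁ ⟨s, _⟩ ≤ c₁ (Fin.last p) := h₁ (Fin.le_last _)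
      _ = c₂ 0 := h
      _ ≤ _ := h₂ (Fin.zero_le _)
  · simp only [_root_.chainJoin, hs, ht, dite_false]
    exact h₂ (show (s : ℕ) - p ≤ t - p by omega)

lemma monotone_iff_chainFront_chainBack :
    Monotone c ↔ Monotone (chainFront p q c) ∧ Monotone (chainBack p q c) :=
  ⟨fun hc => ⟨hc.chainFront, hc.chainBack⟩, fun ⟨h₁, h₂⟩ => by
    simpa using h₁.chainJoin h₂ (chainFront_last c)⟩

end Split

section Chains
variable {P : Type*} [PartialOrder P] [LocallyFiniteOrder P] [DecidableEq P]

lemma mem_chainTuples_iff {n : ℕ} {x y : P} {c : Fin (n + 1) → P} :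
    c ∈ chainTuples P n x y ↔ Monotone c ∧ c 0 = x ∧ c (Fin.last n) = y := by
  classical
  simp only [chainTuples, mem_filter, Fintype.mem_piFinset, mem_Icc, and_iff_right_iff_imp]
  rintro ⟨hm, rfl, rfl⟩ i
  exact ⟨hm (Fin.zero_le i), hm (Fin.le_last i)⟩

variable {p q : ℕ} {x y : P}

lemma mem_chainTuples_add_iff {c : Fin (p + q + 1) → P} :
    c ∈ chainTuples P (p + q) x y ↔ chainFront p q c ∈ chainTuples P p x (chainBack p q c 0) ∧
      chainBack p q c ∈ chainTuples P q (chainBack p q c 0) y := by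
  rw [mem_chainTuples_iff, mem_chainTuples_iff, mem_chainTuples_iff,
    monotone_iff_chainFront_chainBack]
  constructor
  · rintro ⟨⟨h₁, h₂⟩, h₀, hl⟩
    exact ⟨⟨h₁, h₀, rfl⟩, h₂, rfl, hl⟩
  · rintro ⟨⟨h₁, h₀, -⟩, h₂, -, hl⟩
    exact ⟨⟨h₁, h₂⟩, h₀, hl⟩

lemma chainJoin_mem_chainTuples {j : P} {c₁ : Fin (p + 1) → P} {c₂ : Fin (q + 1) → P}
    (h₁ : c₁ ∈ chainTuples P p x j) (h₂ : c₂ ∈ chainTuples P q j y) :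
    chainJoin p q c₁ c₂ ∈ chainTuples P (p + q) x y := by
  have hj : c₁ (Fin.last p) = c₂ 0 :=
    ((mem_chainTuples_iff.1 h₁).2.2).trans (mem_chainTuples_iff.1 h₂).2.1.symm
  rw [mem_chainTuples_add_iff, chainFront_chainJoin, chainBack_chainJoin hj]
  rw [← hj, (mem_chainTuples_iff.1 h₁).2.2]
  exact ⟨h₁, h₂⟩

variable (p q x y) in
lemma sum_chainTuples_add {M : Type*} [AddCommMonoid M]
    (F : (Fin (p + 1) → P) → (Fin (q + 1) → P) → M) :
    ∑ c ∈ chainTuples P (p + q) x y, F (chainFront p q c) (chainBack p q c) =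
      ∑ j ∈ Icc x y, ∑ c₁ ∈ chainTuples P p x j, ∑ c₂ ∈ chainTuples P q j y, F c₁ c₂ := by
  simp_rw [← sum_product']
  rw [sum_sigma']
  refine sum_nbij' (fun c => ⟨chainBack p q c 0, chainFront p q c, chainBack p q c⟩)
    (fun z => chainJoin p q z.2.1 z.2.2) ?_ ?_ ?_ ?_ (fun _ _ => rfl)
  · intro c hc
    have hc' := mem_chainTuples_add_iff.1 hc
    rw [mem_sigma, mem_product, mem_Icc]
    exact ⟨⟨le_of_mem_chainTuples P hc'.1, le_of_mem_chainTuples P hc'.2⟩, hc'⟩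
  · rintro ⟨j, c₁, c₂⟩ hz
    rw [mem_sigma, mem_product] at hz
    exact chainJoin_mem_chainTuples hz.2.1 hz.2.2
  · intro c _
    simp
  · rintro ⟨j, c₁, c₂⟩ hz
    rw [mem_sigma, mem_product] at hz
    obtain ⟨-, h₁, h₂⟩ := hz
    have hj₁ := (mem_chainTuples_iff.1 h₁).2.2
    have hj₂ := (mem_chainTuples_iff.1 h₂).2.1
    rw [chainBack_chainJoin (hj₁.trans hj₂.symm), chainFront_chainJoin, hj₂]

end Chains

section Phi
variable {k : Type*} {P : Type*} [PartialOrder P]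

/-- Extension by zero to all tuples, so that sums over chains need not carry monotonicity
proofs. -/
noncomputable def extendCochain [Zero k] {n : ℕ} (f : SChain P n → k) (c : Fin (n + 1) → P) :
    k :=
  open scoped Classical in if h : Monotone c then f ⟨c, h⟩ else 0

noncomputable def phiTerm [CommSemiring k] {n : ℕ} (f : SChain P n → k)
    (a : Fin n → IncidenceAlgebra k P) (c : Fin (n + 1) → P) : k :=
  extendCochain f c * ∏ t : Fin n, a t (c t.castSucc) (c t.succ)

variable [Field k]

lemma extendCochain_sCup {p q : ℕ} (f : SChain P p → k) (g : SChain P q → k)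
    (c : Fin (p + q + 1) → P) :
    extendCochain (sCup k P p q f g) c =
      extendCochain f (chainFront p q c) * extendCochain g (chainBack p q c) := by
  unfold extendCochain
  by_cases hc : Monotone c
  · rw [dif_pos hc, dif_pos hc.chainFront, dif_pos hc.chainBack]
    rfl
  · rw [dif_neg hc]
    rw [monotone_iff_chainFront_chainBack, not_and_or] at hc
    rcases hc with h | h <;> simp [h]

lemma phiTerm_sCup {p q : ℕ} (f : SChain P p → k) (g : SChain P q → k)
    (a : Fin (p + q) → IncidenceAlgebra k P) (c : Fin (p + q + 1) → P) :
    phiTerm (sCup k P p q f g) a c =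
      phiTerm f (fun t => a ⟨t, by omega⟩) (chainFront p q c) *
        phiTerm g (fun s => a ⟨p + s, by omega⟩) (chainBack p q c) := by
  rw [phiTerm, phiTerm, phiTerm, extendCochain_sCup, Fin.prod_univ_add]
  exact mul_mul_mul_comm _ _ _ _

variable [LocallyFiniteOrder P] [DecidableEq P]

lemma Phi_apply (n : ℕ) (f : SChain P n → k) (a : Fin n → IncidenceAlgebra k P) (x y : P) :
    Phi k P n f a x y = ∑ c ∈ chainTuples P n x y, phiTerm f a c := by
  rw [← sum_attach]
  refine sum_congr rfl fun c _ => ?_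
  rw [phiTerm, extendCochain, dif_pos (chainTuples_mono P c.2)]

end Phi

theorem phi_intertwines_cup_products_general
    (k : Type*) [Field k]
    (P : Type*) [PartialOrder P] [LocallyFiniteOrder P] [DecidableEq P]
    (p q : ℕ)
    (f : SChain P p → k) (g : SChain P q → k) :
    Phi k P (p + q) (sCup k P p q f g) = hCup p q (Phi k P p f) (Phi k P q g) := by
  funext a
  ext x y -
  simp only [Phi_apply, phiTerm_sCup, hCup, IncidenceAlgebra.mul_apply, sum_mul_sum]
  exact sum_chainTuples_add p q x y fun c₁ c₂ => phiTerm f _ c₁ * phiTerm g _ c₂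

theorem phi_intertwines_cup_products
    (k : Type*) [Field k] [CharZero k]
    (P : Type*) [PartialOrder P] [LocallyFiniteOrder P] [DecidableEq P]
    (p q : ℕ) (hp : 1 ≤ p) (hq : 1 ≤ q)
    (f : SChain P p → k) (g : SChain P q → k) :
    Phi k P (p + q) (sCup k P p q f g) = hCup p q (Phi k P p f) (Phi k P q g) :=
  phi_intertwines_cup_products_general k P p q f g
end

section
/- Let P be a locally finite poset and k a field of characteristic 0. Let ω and ω' be W-valued 2-cochains on P, let φ be a W-valued 1-cochain on P (assigning φ(i,j) ∈ W to each i ≤ j), and let f_φ be the k[[λ]]-linear bijection of the incidence algebra of P over k[[λ]] given by f_φ(a)(i,j) = φ(i,j)·a(i,j). Then f_φ(F_{ω'}(a,b)) = F_ω(f_φ(a), f_φ(b)) for all a, b if and only if ω'(i,j,k')·φ(i,k') = ω(i,j,k')·φ(i,j)·φ(j,k') for all chains i ≤ j ≤ k', i.e., if and only if ω' = (dφ)·ω. In particular, cohomologous W-valued 2-cocycles ω and ω' yield equivalent deformations F_ω and F_{ω'}. -/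
/-!
Entry `(i, l)` of `f_φ (F_{ω'} a b)` is `∑ j, ω' i j l * φ i l * a i j * b j l` and entry `(i, l)`
of `F_ω (f_φ a) (f_φ b)` is `∑ j, ω i j l * φ i j * φ j l * a i j * b j l`, so the cocycle
relation gives the intertwining term by term. Conversely, testing the intertwining on the
elementary elements supported at `(i, j)` and `(j, l)` leaves only the term `j` of the sum.
Since every `φ i j` has constant term `1`, it is a unit of `k[[λ]]`, so `f_φ` is invertible.
-/

open Finset PowerSeries

/-- The deformed product `F_ω` on the incidence algebra over a commutative ring `R`. -/
def Fdef {R : Type*} [CommRing R] {P : Type*} [PartialOrder P] [LocallyFiniteOrder P]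
    (ω : P → P → P → R) (a b : IncidenceAlgebra R P) : IncidenceAlgebra R P :=
  ⟨fun i l => ∑ j ∈ Finset.Icc i l, ω i j l * a i j * b j l,
   fun i l h => by
    try dsimp only
    rw [Finset.Icc_eq_empty h, Finset.sum_empty]⟩

/-- The rescaling map `f_φ(a)(i,j) = φ(i,j)·a(i,j)` of the incidence algebra. -/
def fRescale {R : Type*} [CommRing R] {P : Type*} [PartialOrder P]
    (φ : P → P → R) (a : IncidenceAlgebra R P) : IncidenceAlgebra R P :=
  ⟨fun i j => φ i j * a i j,
   fun i j h => by
    try dsimp only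
    rw [IncidenceAlgebra.apply_eq_zero_of_not_le h, mul_zero]⟩

namespace IncidenceAlgebra

variable {R : Type*} [Zero R] {P : Type*} [PartialOrder P]

open scoped Classical in
noncomputable def single (i j : P) (hij : i ≤ j) (r : R) : IncidenceAlgebra R P :=
  ⟨fun x y => if x = i ∧ y = j then r else 0, fun x y hxy => by
    rw [if_neg]
    rintro ⟨rfl, rfl⟩
    exact hxy hij⟩

lemma single_apply_self {i j : P} (hij : i ≤ j) (r : R) : single i j hij r i j = r := by
  simp [single]

lemma single_apply_of_ne_left {i j x : P} (hij : i ≤ j) (r : R) (hx : x ≠ i) (y : P) :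
    single i j hij r x y = 0 := by
  simp [single, hx]

lemma single_apply_of_ne_right {i j y : P} (hij : i ≤ j) (r : R) (x : P) (hy : y ≠ j) :
    single i j hij r x y = 0 := by
  simp [single, hy]

end IncidenceAlgebra

open IncidenceAlgebra

section Rescale

variable {R : Type*} [CommRing R] {P : Type*} [PartialOrder P]

@[simp] lemma fRescale_apply (φ : P → P → R) (a : IncidenceAlgebra R P) (i j : P) :
    fRescale φ a i j = φ i j * a i j := rfl

lemma fRescale_single (φ : P → P → R) {i j : P} (hij : i ≤ j) (r : R) :
    fRescale φ (single i j hij r) = single i j hij (φ i j * r) := by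
  refine IncidenceAlgebra.ext fun x y _ => ?_
  by_cases hx : x = i
  · by_cases hy : y = j
    · subst hx hy
      simp only [fRescale_apply, single_apply_self]
    · simp only [fRescale_apply, single_apply_of_ne_right hij _ _ hy, mul_zero]
  · simp only [fRescale_apply, single_apply_of_ne_left hij _ hx, mul_zero]

lemma fRescale_smul_add (φ : P → P → R) (r : R) (a a' : IncidenceAlgebra R P) :
    fRescale φ (r • a + a') = r • fRescale φ a + fRescale φ a' := by
  refine IncidenceAlgebra.ext fun i j _ => ?_
  simp only [fRescale_apply, IncidenceAlgebra.add_apply, constSMul_apply, smul_eq_mul]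
  ring

lemma fRescale_fRescale (φ ψ : P → P → R) (a : IncidenceAlgebra R P) :
    fRescale φ (fRescale ψ a) = fRescale (fun i j => φ i j * ψ i j) a :=
  IncidenceAlgebra.ext fun _ _ _ => (mul_assoc _ _ _).symm

lemma fRescale_eq_self {φ : P → P → R} (hφ : ∀ i j, i ≤ j → φ i j = 1)
    (a : IncidenceAlgebra R P) : fRescale φ a = a :=
  IncidenceAlgebra.ext fun i j hij => by rw [fRescale_apply, hφ i j hij, one_mul]

lemma fRescale_bijective {φ : P → P → R} (hφ : ∀ i j, i ≤ j → IsUnit (φ i j)) :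
    Function.Bijective (fRescale φ) := by
  let ψ : P → P → R := fun i j => Ring.inverse (φ i j)
  have hleft : Function.LeftInverse (fRescale ψ) (fRescale φ) := fun a => by
    rw [fRescale_fRescale]
    exact fRescale_eq_self (fun i j hij => Ring.inverse_mul_cancel _ (hφ i j hij)) a
  have hright : Function.RightInverse (fRescale ψ) (fRescale φ) := fun a => by
    rw [fRescale_fRescale]
    exact fRescale_eq_self (fun i j hij => Ring.mul_inverse_cancel _ (hφ i j hij)) a
  exact ⟨hleft.injective, hright.surjective⟩

lemma map_fRescale_apply {S : Type*} [Semiring S] (g : R →+* S) {φ : P → P → R}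
    (hφ : ∀ i j, i ≤ j → g (φ i j) = 1) (a : IncidenceAlgebra R P) (i j : P) :
    g (fRescale φ a i j) = g (a i j) := by
  by_cases hij : i ≤ j
  · rw [fRescale_apply, map_mul, hφ i j hij, one_mul]
  · simp only [apply_eq_zero_of_not_le hij]

end Rescale

section Deformed

variable {R : Type*} [CommRing R] {P : Type*} [PartialOrder P] [LocallyFiniteOrder P]

@[simp] lemma Fdef_apply (ω : P → P → P → R) (a b : IncidenceAlgebra R P) (i l : P) :
    Fdef ω a b i l = ∑ j ∈ Icc i l, ω i j l * a i j * b j l := rfl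

lemma Fdef_single_single_apply (ω : P → P → P → R) {i j l : P} (hij : i ≤ j) (hjl : j ≤ l)
    (r s : R) : Fdef ω (single i j hij r) (single j l hjl s) i l = ω i j l * r * s := by
  rw [Fdef_apply, Finset.sum_eq_single_of_mem j (mem_Icc.mpr ⟨hij, hjl⟩), single_apply_self,
    single_apply_self]
  intro x _ hx
  rw [single_apply_of_ne_right hij _ _ hx, mul_zero, zero_mul]

theorem fRescale_Fdef_eq_iff (ω ω' : P → P → P → R) (φ : P → P → R) :
    (∀ a b : IncidenceAlgebra R P,
        fRescale φ (Fdef ω' a b) = Fdef ω (fRescale φ a) (fRescale φ b)) ↔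
      ∀ i j l : P, i ≤ j → j ≤ l → ω' i j l * φ i l = ω i j l * φ i j * φ j l := by
  constructor
  · intro H i j l hij hjl
    have hil := congrArg (fun c => c i l) (H (single i j hij 1) (single j l hjl 1))
    simp only [fRescale_apply, fRescale_single, Fdef_single_single_apply, mul_one] at hil
    rwa [mul_comm] at hil
  · intro H a b
    refine IncidenceAlgebra.ext fun i l _ => ?_
    simp only [fRescale_apply, Fdef_apply, Finset.mul_sum]
    refine Finset.sum_congr rfl fun j hj => ?_
    obtain ⟨hij, hjl⟩ := mem_Icc.mp hj
    linear_combination a i j * b j l * H i j l hij hjl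

end Deformed

theorem rescale_intertwines_iff_coboundary_general
    (k : Type*) [Field k]
    (P : Type*) [PartialOrder P] [LocallyFiniteOrder P]
    (ω ω' : P → P → P → PowerSeries k)
    (φ : P → P → PowerSeries k)
    (hφ : ∀ i j : P, i ≤ j → constantCoeff (R := k) (φ i j) = 1) :
    -- main equivalence: `f_φ ∘ F_{ω'} = F_ω ∘ (f_φ × f_φ)` iff `ω' = (dφ)·ω`
    ((∀ a b : IncidenceAlgebra (PowerSeries k) P,
        fRescale φ (Fdef ω' a b) = Fdef ω (fRescale φ a) (fRescale φ b)) ↔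
      (∀ i j k' : P, i ≤ j → j ≤ k' →
        ω' i j k' * φ i k' = ω i j k' * φ i j * φ j k')) ∧
    -- in particular: cohomologous cocycles yield equivalent deformations
    ((∀ i j k' : P, i ≤ j → j ≤ k' →
        ω' i j k' * φ i k' = ω i j k' * φ i j * φ j k') →
      ∃ f : IncidenceAlgebra (PowerSeries k) P → IncidenceAlgebra (PowerSeries k) P,
        Function.Bijective f ∧
        (∀ (r : PowerSeries k) (a a' : IncidenceAlgebra (PowerSeries k) P),
          f (r • a + a') = r • f a + f a') ∧
        (∀ (a : IncidenceAlgebra (PowerSeries k) P) (i j : P),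
          constantCoeff (R := k) (f a i j) = constantCoeff (R := k) (a i j)) ∧
        (∀ a b : IncidenceAlgebra (PowerSeries k) P,
          f (Fdef ω' a b) = Fdef ω (f a) (f b))) := by
  have hunit : ∀ i j, i ≤ j → IsUnit (φ i j) := fun i j hij => by
    rw [isUnit_iff_constantCoeff, hφ i j hij]
    exact isUnit_one
  refine ⟨fRescale_Fdef_eq_iff ω ω' φ, fun H => ⟨fRescale φ, fRescale_bijective hunit,
    fRescale_smul_add φ, map_fRescale_apply _ hφ, (fRescale_Fdef_eq_iff ω ω' φ).mpr H⟩⟩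

theorem rescale_intertwines_iff_coboundary
    (k : Type*) [Field k] [CharZero k]
    (P : Type*) [PartialOrder P] [LocallyFiniteOrder P]
    (ω ω' : P → P → P → PowerSeries k)
    (hω : ∀ i j l : P, i ≤ j → j ≤ l → constantCoeff (R := k) (ω i j l) = 1)
    (hω' : ∀ i j l : P, i ≤ j → j ≤ l → constantCoeff (R := k) (ω' i j l) = 1)
    (φ : P → P → PowerSeries k)
    (hφ : ∀ i j : P, i ≤ j → constantCoeff (R := k) (φ i j) = 1) :
    -- main equivalence: `f_φ ∘ F_{ω'} = F_ω ∘ (f_φ × f_φ)` iff `ω' = (dφ)·ω`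
    ((∀ a b : IncidenceAlgebra (PowerSeries k) P,
        fRescale φ (Fdef ω' a b) = Fdef ω (fRescale φ a) (fRescale φ b)) ↔
      (∀ i j k' : P, i ≤ j → j ≤ k' →
        ω' i j k' * φ i k' = ω i j k' * φ i j * φ j k')) ∧
    -- in particular: cohomologous cocycles yield equivalent deformations
    ((∀ i j k' : P, i ≤ j → j ≤ k' →
        ω' i j k' * φ i k' = ω i j k' * φ i j * φ j k') →
      ∃ f : IncidenceAlgebra (PowerSeries k) P → IncidenceAlgebra (PowerSeries k) P,
        Function.Bijective f ∧
        (∀ (r : PowerSeries k) (a a' : IncidenceAlgebra (PowerSeries k) P),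
          f (r • a + a') = r • f a + f a') ∧
        (∀ (a : IncidenceAlgebra (PowerSeries k) P) (i j : P),
          constantCoeff (R := k) (f a i j) = constantCoeff (R := k) (a i j)) ∧
        (∀ a b : IncidenceAlgebra (PowerSeries k) P,
          f (Fdef ω' a b) = Fdef ω (f a) (f b))) :=
  rescale_intertwines_iff_coboundary_general k P ω ω' φ hφ
end
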